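/- arXiv:math-ph/0303013 — 5 statements merged into one kernel-verified Lean document; each statement's English description precedes it below -/
import Mathlib

section
/- (Lemma 4.1: bound on the defect of the lattice Poisson kernel) Let L = 2^p with integer p ≥ 1, let n ≥ m ≥ 0 be integers, set ε = L^{−n} and R = L^{−(m−1)}, and let a ≥ 0. Let h : Ū_ε(R) → ℝ be the solution of the lattice Dirichlet problem on U_ε(R) with boundary data f ≡ 1 (so that h(x) is the total mass P^a_{U_ε(R)}(x, ∂U_ε(R)) of the lattice Poisson kernel). Then for every x ∈ U_ε(R): 0 ≤ 1 − h(x) ≤ a·R²/2. -/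
/-! The bounds follow from the minimum principle for `a - Δ_ε` (`a ≥ 0`) on the finite set
`Ū_ε(R)`: a function with `(a - Δ_ε) u ≥ 0` in `U_ε(R)` and `u ≥ 0` on `∂U_ε(R)` is nonnegative.
For strict supersolutions this holds because `Δ_ε u ≥ 0` at an interior minimum; in general one
applies it to `u + δ q` and lets `δ → 0`, where `q(y) = (R/2 + ε)² - y₁²` satisfies `-Δ_ε q = 2`
and `q ≥ 0` on `Ū_ε(R)`.

The lower bound is the principle for `1 - h`, as `(a - Δ_ε)(1 - h) = a`. For the upper bound it is
applied to `a q / 2 - (1 - h)`, giving `1 - h ≤ a (R/2 + ε)² / 2 ≤ a R² / 2`, since `2ε ≤ R`. -/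

open scoped ENNReal BigOperators

namespace FRD

abbrev Pt (d : ℕ) := Fin d → ℝ
abbrev Idx (d : ℕ) := Fin d → ℤ

variable {d : ℕ}

/-- The lattice point of `(εℤ)^d` with integer coordinates `k`. -/
noncomputable def toPt (ε : ℝ) (k : Idx d) : Pt d := fun i => ε * (k i : ℝ)

/-- The lattice `(εℤ)^d` as a subset of `ℝ^d`. -/
def latt (d : ℕ) (ε : ℝ) : Set (Pt d) := Set.range (toPt (d := d) ε)

/-- Signed unit direction: `e.1` is the coordinate, `e.2` the sign. -/
noncomputable def sdir (d : ℕ) (e : Fin d × Bool) : Pt d :=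
  Pi.single e.1 (if e.2 then (1 : ℝ) else -1)

/-- Forward/backward lattice derivative in the signed direction `e`. -/
noncomputable def nabla (ε : ℝ) (e : Fin d × Bool) (f : Pt d → ℝ) (x : Pt d) : ℝ :=
  ε⁻¹ * (f (x + ε • sdir d e) - f x)

/-- Iterated lattice derivative. -/
noncomputable def nablaList (ε : ℝ) : List (Fin d × Bool) → (Pt d → ℝ) → Pt d → ℝ
  | [], f => f
  | e :: es, f => nabla ε e (nablaList ε es f)

/-- Lattice Laplacian `Δ_ε`. -/
noncomputable def latLap (ε : ℝ) (f : Pt d → ℝ) (x : Pt d) : ℝ :=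
  ε⁻¹ ^ 2 * ∑ μ : Fin d,
    (f (x + ε • (Pi.single μ 1 : Pt d)) + f (x - ε • (Pi.single μ 1 : Pt d)) - 2 * f x)

/-- Open cube of edge length `R` centered at `z` (sup-metric). -/
def cubeC (z : Pt d) (R : ℝ) : Set (Pt d) := {x | ∀ i, |x i - z i| < R / 2}

/-- `U_ε(R)` (centered at `z`). -/
def UC (ε : ℝ) (z : Pt d) (R : ℝ) : Set (Pt d) := cubeC z R ∩ latt d ε

/-- Lattice boundary `∂U_ε(R)` (centered at `z`). -/
def bdryC (ε : ℝ) (z : Pt d) (R : ℝ) : Set (Pt d) :=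
  {y | y ∈ latt d ε ∧ y ∉ UC ε z R ∧ ∃ x ∈ UC ε z R, ‖x - y‖ = ε}

/-- `Ū_ε(R) = U_ε(R) ∪ ∂U_ε(R)`. -/
def clC (ε : ℝ) (z : Pt d) (R : ℝ) : Set (Pt d) := UC ε z R ∪ bdryC ε z R

/-- `h` solves the lattice Dirichlet problem on the cube of edge `R` centered at `z`,
with mass `a` and boundary data `f`. -/
def IsDirSol (ε : ℝ) (z : Pt d) (R a : ℝ) (f h : Pt d → ℝ) : Prop :=
  (∀ x ∈ UC ε z R, a * h x - latLap ε h x = 0) ∧ ∀ x ∈ bdryC ε z R, h x = f x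

/-- Lattice integral of `F` over the lattice points lying in `X` (`ℝ≥0∞`-valued). -/
noncomputable def eint (ε : ℝ) (X : Set (Pt d)) (F : Pt d → ℝ) : ℝ≥0∞ :=
  ∑' k : Idx d, Set.indicator X (fun x => ENNReal.ofReal (ε ^ d * F x)) (toPt ε k)

/-- Squared lattice Sobolev norm `‖f‖²_{H_K(X_ε)}`. -/
noncomputable def sobSq (ε : ℝ) (K : ℕ) (X : Set (Pt d)) (f : Pt d → ℝ) : ℝ≥0∞ :=
  ∑ j ∈ Finset.range (K + 1), (2 : ℝ≥0∞)⁻¹ ^ j *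
    ∑ es : Fin j → Fin d × Bool,
      eint ε X fun x => (nablaList ε (List.ofFn es) f x) ^ 2

/-- Lattice Sobolev norm `‖f‖_{H_K(X_ε)}`. -/
noncomputable def sobNorm (ε : ℝ) (K : ℕ) (X : Set (Pt d)) (f : Pt d → ℝ) : ℝ≥0∞ :=
  sobSq ε K X f ^ (1/2 : ℝ)

/-- Real-valued lattice integral over the whole lattice. -/
noncomputable def lint (ε : ℝ) (F : Pt d → ℝ) : ℝ := ε ^ d * ∑' k : Idx d, F (toPt ε k)

/-- Squared weighted lattice Sobolev norm `‖f‖²_{φ,K}`. -/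
noncomputable def wSobSq (ε : ℝ) (K : ℕ) (φ : Pt d → ℝ) (f : Pt d → ℝ) : ℝ≥0∞ :=
  ∑ j ∈ Finset.range (K + 1), (2 : ℝ≥0∞)⁻¹ ^ j *
    ∑ es : Fin j → Fin d × Bool,
      ∑' k : Idx d, ENNReal.ofReal
        (ε ^ d * φ (toPt ε k) * (nablaList ε (List.ofFn es) f (toPt ε k)) ^ 2)

/-- Weighted lattice Sobolev norm `‖f‖_{φ,K}`. -/
noncomputable def wSobNorm (ε : ℝ) (K : ℕ) (φ : Pt d → ℝ) (f : Pt d → ℝ) : ℝ≥0∞ :=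
  wSobSq ε K φ f ^ (1/2 : ℝ)

section Lattice

variable {ε R : ℝ} {z : Pt d}

lemma toPt_add (ε : ℝ) (k l : Idx d) : toPt ε (k + l) = toPt ε k + toPt ε l := by
  funext i; simp only [toPt, Pi.add_apply, Int.cast_add]; ring

lemma toPt_sub (ε : ℝ) (k l : Idx d) : toPt ε (k - l) = toPt ε k - toPt ε l := by
  funext i; simp only [toPt, Pi.sub_apply, Int.cast_sub]; ring

lemma toPt_single (ε : ℝ) (μ : Fin d) : toPt ε (Pi.single μ 1) = ε • (Pi.single μ 1 : Pt d) := by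
  funext i; by_cases h : i = μ <;> simp [toPt, h]

lemma antilipschitzWith_toPt (hε : 0 < ε) :
    AntilipschitzWith (Real.toNNReal ε⁻¹) (toPt (d := d) ε) := by
  refine AntilipschitzWith.of_le_mul_dist fun k l => ?_
  rw [Real.coe_toNNReal _ (inv_nonneg.2 hε.le)]
  refine (dist_pi_le_iff (by positivity)).2 fun i => ?_
  calc dist (k i) (l i) = ε⁻¹ * dist (toPt ε k i) (toPt ε l i) := by
        simp only [toPt, ← Int.dist_cast_real, Real.dist_eq, ← mul_sub, abs_mul,
          abs_of_pos hε, inv_mul_cancel_left₀ hε.ne']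
    _ ≤ ε⁻¹ * dist (toPt ε k) (toPt ε l) := by gcongr; exact dist_le_pi_dist _ _ i

lemma _root_.Bornology.IsBounded.finite_inter_latt (hε : 0 < ε) {s : Set (Pt d)}
    (hs : Bornology.IsBounded s) : (s ∩ latt d ε).Finite := by
  have hpre := (antilipschitzWith_toPt (d := d) hε).isBounded_preimage hs
  rw [latt, ← Set.image_preimage_eq_inter_range]
  exact (Metric.isCompact_of_isClosed_isBounded (isClosed_discrete _) hpre).finite_of_discrete
    |>.image _

lemma abs_sub_le_of_mem_clC (hε : 0 ≤ ε) {y : Pt d} (hy : y ∈ clC ε z R) (i : Fin d) :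
    |y i - z i| ≤ R / 2 + ε := by
  rcases hy with hy | ⟨-, -, x, hx, hxy⟩
  · linarith [hy.1 i]
  · have hyx : |x i - y i| ≤ ε := by
      simpa [Real.norm_eq_abs, hxy] using norm_le_pi_norm (x - y) i
    linarith [abs_sub_le (y i) (x i) (z i), abs_sub_comm (y i) (x i), hx.1 i]

lemma clC_finite (hε : 0 < ε) : (clC ε z R).Finite := by
  set c : Pt d := fun _ => R / 2 + ε
  have hsub : clC ε z R ⊆ Set.Icc (z - c) (z + c) ∩ latt d ε := fun y hy => by
    refine ⟨⟨fun i => ?_, fun i => ?_⟩, hy.elim (·.2) (·.1)⟩ <;>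
      simp only [Pi.sub_apply, Pi.add_apply, c] <;>
      linarith [abs_le.1 (abs_sub_le_of_mem_clC hε.le hy i)]
  exact ((Metric.isBounded_Icc (z - c) (z + c)).finite_inter_latt hε).subset hsub

lemma add_mem_clC {x v : Pt d} (hx : x ∈ UC ε z R) (hv : ‖v‖ = ε) (hxv : x + v ∈ latt d ε) :
    x + v ∈ clC ε z R := by
  by_cases hU : x + v ∈ UC ε z R
  · exact Or.inl hU
  · exact Or.inr ⟨hxv, hU, x, hx, by rwa [sub_add_cancel_left, norm_neg]⟩

end Lattice

section Laplacian

variable {ε R : ℝ} {z : Pt d}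

lemma latLap_add (f g : Pt d → ℝ) (x : Pt d) :
    latLap ε (fun y => f y + g y) x = latLap ε f x + latLap ε g x := by
  simp only [latLap, ← mul_add, ← Finset.sum_add_distrib]
  congr 1; refine Finset.sum_congr rfl fun _ _ => by ring

lemma latLap_const_mul (c : ℝ) (f : Pt d → ℝ) (x : Pt d) :
    latLap ε (fun y => c * f y) x = c * latLap ε f x := by
  simp only [latLap, Finset.mul_sum]
  refine Finset.sum_congr rfl fun _ _ => by ring

lemma latLap_sub_const (f : Pt d → ℝ) (c : ℝ) (x : Pt d) :
    latLap ε (fun y => f y - c) x = latLap ε f x := by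
  simp only [latLap]
  congr 1; refine Finset.sum_congr rfl fun _ _ => by ring

lemma latLap_const_sub (c : ℝ) (f : Pt d → ℝ) (x : Pt d) :
    latLap ε (fun y => c - f y) x = -latLap ε f x := by
  simp only [latLap, Finset.mul_sum, ← Finset.sum_neg_distrib]
  refine Finset.sum_congr rfl fun _ _ => by ring

noncomputable def parab (ε R : ℝ) (z : Pt d) (i : Fin d) (y : Pt d) : ℝ :=
  (R / 2 + ε) ^ 2 - (y i - z i) ^ 2

lemma latLap_parab (hε : ε ≠ 0) (i : Fin d) (x : Pt d) : latLap ε (parab ε R z i) x = -2 := by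
  have hμ : ∀ μ : Fin d, parab ε R z i (x + ε • Pi.single μ 1) +
      parab ε R z i (x - ε • Pi.single μ 1) - 2 * parab ε R z i x =
      if μ = i then -2 * ε ^ 2 else 0 := fun μ => by
    by_cases h : μ = i
    · subst h; simp [parab]; ring
    · simp [parab, h, Ne.symm h]; ring
  simp only [latLap, hμ, Finset.sum_ite_eq', Finset.mem_univ, if_true]
  field_simp

lemma parab_le (i : Fin d) (y : Pt d) : parab ε R z i y ≤ (R / 2 + ε) ^ 2 :=
  sub_le_self _ (sq_nonneg _)

lemma parab_nonneg (hε : 0 ≤ ε) {y : Pt d} (hy : y ∈ clC ε z R) (i : Fin d) :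
    0 ≤ parab ε R z i y :=
  sub_nonneg.2 <| sq_le_sq' (abs_le.1 (abs_sub_le_of_mem_clC hε hy i)).1
    (abs_le.1 (abs_sub_le_of_mem_clC hε hy i)).2

end Laplacian

section MaximumPrinciple

variable {ε R a : ℝ} {z : Pt d}

lemma latLap_nonneg_of_forall_le (hε : 0 < ε) {u : Pt d → ℝ} {x : Pt d} (hx : x ∈ UC ε z R)
    (hmin : ∀ y ∈ clC ε z R, u x ≤ u y) : 0 ≤ latLap ε u x := by
  obtain ⟨k, hk⟩ := hx.2
  have hnorm : ∀ μ : Fin d, ‖ε • (Pi.single μ 1 : Pt d)‖ = ε := fun μ => by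
    rw [norm_smul, Pi.norm_single, norm_one, mul_one, Real.norm_of_nonneg hε.le]
  refine mul_nonneg (by positivity) (Finset.sum_nonneg fun μ _ => ?_)
  have hplus := hmin _ <| add_mem_clC hx (hnorm μ)
    ⟨k + Pi.single μ 1, by rw [toPt_add, toPt_single, hk]⟩
  have hminus := hmin _ <| add_mem_clC hx (v := -(ε • Pi.single μ 1)) (by rw [norm_neg, hnorm])
    ⟨k - Pi.single μ 1, by rw [toPt_sub, toPt_single, hk, sub_eq_add_neg]⟩
  rw [← sub_eq_add_neg] at hminus
  linarith

lemma nonneg_of_strict_supersolution (hε : 0 < ε) (ha : 0 ≤ a) {u : Pt d → ℝ}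
    (hint : ∀ y ∈ UC ε z R, 0 < a * u y - latLap ε u y)
    (hbd : ∀ y ∈ bdryC ε z R, 0 ≤ u y) {x : Pt d} (hx : x ∈ UC ε z R) : 0 ≤ u x := by
  obtain ⟨x₀, hx₀, hmin⟩ := Set.exists_min_image _ u (clC_finite hε) ⟨x, Or.inl hx⟩
  refine le_trans ?_ (hmin x (Or.inl hx))
  rcases hx₀ with hU | hB
  · have hlap := latLap_nonneg_of_forall_le hε hU hmin
    by_contra! hneg
    nlinarith [hint x₀ hU]
  · exact hbd x₀ hB

theorem nonneg_of_supersolution (hd : 1 ≤ d) (hε : 0 < ε) (ha : 0 ≤ a) {u : Pt d → ℝ}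
    (hint : ∀ y ∈ UC ε z R, 0 ≤ a * u y - latLap ε u y)
    (hbd : ∀ y ∈ bdryC ε z R, 0 ≤ u y) {x : Pt d} (hx : x ∈ UC ε z R) : 0 ≤ u x := by
  set q := parab ε R z ⟨0, hd⟩
  have hpert : ∀ δ > 0, 0 ≤ u x + δ * q x := fun δ hδ => by
    refine nonneg_of_strict_supersolution (u := fun y => u y + δ * q y) hε ha
      (fun y hy => ?_) (fun y hy => ?_) hx
    · have hq := parab_nonneg hε.le (Or.inl hy) ⟨0, hd⟩
      rw [latLap_add, latLap_const_mul, latLap_parab hε.ne']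
      nlinarith [hint y hy, mul_nonneg (mul_nonneg ha hδ.le) hq]
    · nlinarith [hbd y hy, mul_nonneg hδ.le (parab_nonneg hε.le (Or.inr hy) ⟨0, hd⟩)]
  have hlim : Filter.Tendsto (fun δ => u x + δ * q x) (nhdsWithin 0 (Set.Ioi 0)) (nhds (u x)) :=
    tendsto_nhdsWithin_of_tendsto_nhds <| by
      simpa using ((continuous_id.mul continuous_const).const_add (u x)).tendsto (0 : ℝ)
  exact ge_of_tendsto hlim (eventually_nhdsWithin_of_forall hpert)

end MaximumPrinciple

lemma one_sub_bounds_of_isDirSol (hd : 1 ≤ d) {ε R a : ℝ} {z : Pt d} (hε : 0 < ε)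
    (ha : 0 ≤ a) {h : Pt d → ℝ} (hsol : IsDirSol ε z R a (fun _ => 1) h) {x : Pt d}
    (hx : x ∈ UC ε z R) : 0 ≤ 1 - h x ∧ 1 - h x ≤ a * (R / 2 + ε) ^ 2 / 2 := by
  obtain ⟨hpde, hbc⟩ := hsol
  set q := parab ε R z ⟨0, hd⟩
  have hq : ∀ y ∈ clC ε z R, 0 ≤ q y := fun y hy => parab_nonneg hε.le hy _
  constructor
  · refine nonneg_of_supersolution hd hε ha (u := fun y => 1 - h y)
      (fun y hy => ?_) (fun y hy => by simp [hbc y hy]) hx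
    rw [latLap_const_sub]
    linarith [hpde y hy]
  · -- `(a - Δ_ε)(a q / 2 - (1 - h)) = a² q / 2`
    have hsup := nonneg_of_supersolution hd hε ha (u := fun y => a / 2 * q y + (h y - 1))
      (fun y hy => ?_) (fun y hy => ?_) hx
    · nlinarith [parab_le (ε := ε) (R := R) (z := z) ⟨0, hd⟩ x]
    · rw [latLap_add, latLap_const_mul, latLap_parab hε.ne', latLap_sub_const]
      nlinarith [hpde y hy, mul_nonneg (mul_nonneg ha ha) (hq y (Or.inl hy))]
    · simp only [hbc y hy, sub_self, add_zero]
      exact mul_nonneg (by positivity) (hq y (Or.inr hy))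

lemma two_mul_zpow_neg_le_zpow_one_sub {L : ℝ} (hL : 2 ≤ L) {m n : ℕ} (hmn : m ≤ n) :
    2 * L ^ (-(n : ℤ)) ≤ L ^ (1 - (m : ℤ)) :=
  calc 2 * L ^ (-(n : ℤ)) ≤ L * L ^ (-(n : ℤ)) := by gcongr
    _ = L ^ (1 - (n : ℤ)) := by rw [sub_eq_add_neg, zpow_one_add₀ (by positivity)]
    _ ≤ L ^ (1 - (m : ℤ)) := zpow_le_zpow_right₀ (by linarith) (by omega)

/-- Lemma 4.1, bound on the defect of the lattice Poisson kernel. -/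
theorem poisson_kernel_defect (d : ℕ) (hd : 1 ≤ d) (p : ℕ) (hp : 1 ≤ p)
    (n m : ℕ) (hmn : m ≤ n) (a : ℝ) (ha : 0 ≤ a) (ε R : ℝ)
    (hεdef : ε = ((2 : ℝ) ^ p) ^ (-(n : ℤ)))
    (hRdef : R = ((2 : ℝ) ^ p) ^ (1 - (m : ℤ)))
    (h : Pt d → ℝ) (hsol : IsDirSol ε (0 : Pt d) R a (fun _ => 1) h) :
    ∀ x ∈ UC ε (0 : Pt d) R, 0 ≤ 1 - h x ∧ 1 - h x ≤ a * R ^ 2 / 2 := by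
  intro x hx
  have hε : 0 < ε := by rw [hεdef]; positivity
  have hεR : 2 * ε ≤ R := by
    rw [hεdef, hRdef]
    exact two_mul_zpow_neg_le_zpow_one_sub (le_self_pow₀ one_le_two (by omega)) hmn
  obtain ⟨hlow, hup⟩ := one_sub_bounds_of_isDirSol hd hε ha hsol hx
  refine ⟨hlow, hup.trans ?_⟩
  gcongr <;> linarith

end FRD
end

section
/- (Lattice energy identity, equation (A.1.51)) Let d ≥ 1, ε > 0, a ∈ ℝ, and let h, g, φ : (εℤ)^d → ℝ with φ of finite support. If a·h(x) − (Δ_ε h)(x) = g(x) for every x in the support of φ, then a ∫_{(εℤ)^d} dz φ h² + (1/2) Σ_{e ∈ {±ê_1,…,±ê_d}} ∫_{(εℤ)^d} dz φ (∇_e h)² = ∫_{(εℤ)^d} dz [ φ h g + (1/2)(Δ_ε φ) h² ], exactly as in the continuum, with no correction terms vanishing with ε. -/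
open scoped ENNReal BigOperators

namespace FRD

variable {d : ℕ}

private lemma tsum_shift' {d : ℕ} (u : Idx d) (f : Idx d → ℝ) :
    ∑' k : Idx d, f (k + u) = ∑' k : Idx d, f k :=
  (Equiv.addRight u).tsum_eq f

/-- key telescoping lemma per direction -/
private lemma key_shift {d : ℕ} (u : Idx d) (Φ H : Idx d → ℝ)
    (hfin : (Function.support Φ).Finite) :
    ∑' k : Idx d,
      ((1/2) * (Φ k * (H (k + u) - H k)^2) + (1/2) * (Φ k * (H (k - u) - H k)^2)
        + Φ k * H k * (H (k + u) + H (k - u) - 2 * H k)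
        - (1/2) * ((Φ (k + u) + Φ (k - u) - 2 * Φ k) * H k ^ 2)) = 0 := by
  classical
  set S : Finset (Idx d) := hfin.toFinset with hS
  set T : Finset (Idx d) := (S ∪ S.image (· + u)) ∪ S.image (· - u) with hTdef
  have hT : ∀ k ∉ T, Φ k = 0 ∧ Φ (k + u) = 0 ∧ Φ (k - u) = 0 := by
    intro k hk
    simp only [hTdef, Finset.mem_union, Finset.mem_image, not_or, not_exists] at hk
    obtain ⟨⟨h1, h2⟩, h3⟩ := hk
    refine ⟨?_, ?_, ?_⟩
    · by_contra h; exact h1 (hS ▸ hfin.mem_toFinset.2 h)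
    · by_contra h
      exact (h3 (k + u)) ⟨hfin.mem_toFinset.2 h, by abel⟩
    · by_contra h
      exact (h2 (k - u)) ⟨hfin.mem_toFinset.2 h, by abel⟩
  set W : Idx d → ℝ := fun k =>
      (1/2) * (Φ k * (H (k + u) - H k)^2) + (1/2) * (Φ k * (H (k - u) - H k)^2)
        + Φ k * H k * (H (k + u) + H (k - u) - 2 * H k)
        - (1/2) * ((Φ (k + u) + Φ (k - u) - 2 * Φ k) * H k ^ 2) with hW
  set Wb : Idx d → ℝ := fun k =>
      (1/2) * (Φ k * (H (k - u) - H k)^2) + Φ k * H k * H (k - u)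
        - (1/2) * (Φ (k - u) * H k ^ 2) with hWb
  set W0 : Idx d → ℝ := fun k => W k - Wb k with hW0
  have sWb : Summable Wb := by
    apply summable_of_ne_finset_zero (s := T)
    intro k hk
    obtain ⟨h1, _, h3⟩ := hT k hk
    simp [hWb, h1, h3]
  have sW0 : Summable W0 := by
    apply summable_of_ne_finset_zero (s := T)
    intro k hk
    obtain ⟨h1, h2, h3⟩ := hT k hk
    simp [hW0, hW, hWb, h1, h2, h3]
  have sWbu : Summable (fun k => Wb (k + u)) := by
    apply summable_of_ne_finset_zero (s := T)
    intro k hk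
    obtain ⟨h1, h2, _⟩ := hT k hk
    simp [hWb, add_sub_cancel_right, h1, h2]
  have sC : Summable (fun k : Idx d => (1/2) * (Φ k * H k ^ 2)) := by
    apply summable_of_ne_finset_zero (s := T)
    intro k hk
    simp [(hT k hk).1]
  have sCu : Summable (fun k : Idx d => (1/2) * (Φ (k + u) * H (k + u) ^ 2)) := by
    apply summable_of_ne_finset_zero (s := T)
    intro k hk
    simp [(hT k hk).2.1]
  have step1 : ∑' k, W k = ∑' k, W0 k + ∑' k, Wb k := by
    rw [← Summable.tsum_add sW0 sWb]
    exact tsum_congr fun k => by simp [hW0]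
  have step2 : ∑' k, Wb k = ∑' k, Wb (k + u) := (tsum_shift' u Wb).symm
  have step3 : ∑' k, W0 k + ∑' k, Wb (k + u)
      = ∑' k, (W0 k + Wb (k + u)) := (Summable.tsum_add sW0 sWbu).symm
  have step4 : ∀ k : Idx d, W0 k + Wb (k + u)
      = (1/2) * (Φ (k + u) * H (k + u) ^ 2) - (1/2) * (Φ k * H k ^ 2) := by
    intro k
    simp only [hW0, hW, hWb, add_sub_cancel_right]
    ring
  have step5 : ∑' k : Idx d, ((1/2) * (Φ (k + u) * H (k + u) ^ 2)
      - (1/2) * (Φ k * H k ^ 2)) = 0 := by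
    rw [Summable.tsum_sub sCu sC, tsum_shift' u (fun k => (1/2) * (Φ k * H k ^ 2)), sub_self]
  calc ∑' k, W k = ∑' k, (W0 k + Wb (k + u)) := by rw [step1, step2, step3]
    _ = 0 := by rw [tsum_congr step4, step5]

private lemma idx_energy {d : ℕ} (a c : ℝ) (Φ H G : Idx d → ℝ)
    (hfin : (Function.support Φ).Finite)
    (heq : ∀ k, Φ k ≠ 0 →
      a * H k - c * ∑ μ : Fin d,
        (H (k + Pi.single μ 1) + H (k - Pi.single μ 1) - 2 * H k) = G k) :
    a * ∑' k : Idx d, Φ k * H k ^ 2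
      + (1/2) * ∑ e : Fin d × Bool, ∑' k : Idx d,
          Φ k * (c * ((if e.2 then H (k + Pi.single e.1 1) else H (k - Pi.single e.1 1))
            - H k) ^ 2)
      = ∑' k : Idx d, (Φ k * H k * G k
          + (1/2) * (c * ∑ μ : Fin d,
              (Φ (k + Pi.single μ 1) + Φ (k - Pi.single μ 1) - 2 * Φ k)) * H k ^ 2) := by
  classical
  set S : Finset (Idx d) := hfin.toFinset with hS
  have hSmem : ∀ k, Φ k ≠ 0 → k ∈ S := fun k h => hfin.mem_toFinset.2 h
  set T : Finset (Idx d) :=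
    S ∪ Finset.biUnion Finset.univ (fun μ : Fin d =>
      S.image (· + Pi.single μ 1) ∪ S.image (· - Pi.single μ 1)) with hTdef
  have hT0 : ∀ k ∉ T, Φ k = 0 := by
    intro k hk
    by_contra h
    exact hk (Finset.mem_union_left _ (hSmem k h))
  have hTp : ∀ k ∉ T, ∀ μ : Fin d, Φ (k + Pi.single μ 1) = 0 := by
    intro k hk μ
    by_contra h
    apply hk
    refine Finset.mem_union_right _ (Finset.mem_biUnion.2 ⟨μ, Finset.mem_univ _, ?_⟩)
    exact Finset.mem_union_right _ (Finset.mem_image.2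
      ⟨k + Pi.single μ 1, hSmem _ h, by abel⟩)
  have hTm : ∀ k ∉ T, ∀ μ : Fin d, Φ (k - Pi.single μ 1) = 0 := by
    intro k hk μ
    by_contra h
    apply hk
    refine Finset.mem_union_right _ (Finset.mem_biUnion.2 ⟨μ, Finset.mem_univ _, ?_⟩)
    exact Finset.mem_union_left _ (Finset.mem_image.2
      ⟨k - Pi.single μ 1, hSmem _ h, by abel⟩)
  -- summable helper
  have sumT : ∀ f : Idx d → ℝ, (∀ k ∉ T, f k = 0) → Summable f :=
    fun f hf => summable_of_ne_finset_zero hf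
  -- the per-direction bracket
  set W : Fin d → Idx d → ℝ := fun μ k =>
      (1/2) * (Φ k * (H (k + Pi.single μ 1) - H k)^2)
        + (1/2) * (Φ k * (H (k - Pi.single μ 1) - H k)^2)
        + Φ k * H k * (H (k + Pi.single μ 1) + H (k - Pi.single μ 1) - 2 * H k)
        - (1/2) * ((Φ (k + Pi.single μ 1) + Φ (k - Pi.single μ 1) - 2 * Φ k) * H k ^ 2)
    with hWdef
  -- pointwise: X - Y = ∑ μ, c * W μ k
  set X : Idx d → ℝ := fun k => a * (Φ k * H k ^ 2)
      + (1/2) * ∑ e : Fin d × Bool,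
          Φ k * (c * ((if e.2 then H (k + Pi.single e.1 1) else H (k - Pi.single e.1 1))
            - H k) ^ 2) with hXdef
  set Y : Idx d → ℝ := fun k => Φ k * H k * G k
      + (1/2) * (c * ∑ μ : Fin d,
          (Φ (k + Pi.single μ 1) + Φ (k - Pi.single μ 1) - 2 * Φ k)) * H k ^ 2 with hYdef
  have hG : ∀ k, Φ k * H k * G k = a * (Φ k * H k ^ 2)
      - Φ k * H k * (c * ∑ μ : Fin d,
        (H (k + Pi.single μ 1) + H (k - Pi.single μ 1) - 2 * H k)) := by
    intro k
    by_cases h : Φ k = 0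
    · simp [h]
    · rw [← heq k h]; ring
  have hpt : ∀ k, X k - Y k = ∑ μ : Fin d, c * W μ k := by
    intro k
    simp only [hXdef, hYdef, hWdef, hG k, Fintype.sum_prod_type, Fintype.sum_bool,
      if_true, if_false, Bool.false_eq_true]
    simp only [Finset.mul_sum, Finset.sum_mul]
    rw [show ∀ A p q r : ℝ, A + p - (A - q + r) = p + q - r by intros; ring]
    rw [← Finset.sum_add_distrib, ← Finset.sum_sub_distrib]
    apply Finset.sum_congr rfl
    intro μ _
    ring
  -- summabilities
  have sX : Summable X := by
    apply sumT; intro k hk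
    simp [hXdef, hT0 k hk]
  have sY : Summable Y := by
    apply sumT; intro k hk
    simp [hYdef, hT0 k hk, hTp k hk, hTm k hk]
  have sW : ∀ μ : Fin d, Summable (fun k => c * W μ k) := by
    intro μ
    apply sumT; intro k hk
    simp [hWdef, hT0 k hk, hTp k hk μ, hTm k hk μ]
  -- main computation
  have hXY : ∑' k, X k - ∑' k, Y k = 0 := by
    rw [← Summable.tsum_sub sX sY, tsum_congr hpt,
      Summable.tsum_finsetSum (fun μ _ => sW μ)]
    apply Finset.sum_eq_zero
    intro μ _
    rw [tsum_mul_left, key_shift (Pi.single μ 1) Φ H hfin, mul_zero]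
  have hXsplit : ∑' k, X k = a * ∑' k : Idx d, Φ k * H k ^ 2
      + (1/2) * ∑ e : Fin d × Bool, ∑' k : Idx d,
          Φ k * (c * ((if e.2 then H (k + Pi.single e.1 1) else H (k - Pi.single e.1 1))
            - H k) ^ 2) := by
    have s1 : Summable (fun k : Idx d => a * (Φ k * H k ^ 2)) := by
      apply sumT; intro k hk; simp [hT0 k hk]
    have s2 : ∀ e : Fin d × Bool, Summable (fun k : Idx d =>
        Φ k * (c * ((if e.2 then H (k + Pi.single e.1 1) else H (k - Pi.single e.1 1))
          - H k) ^ 2)) := by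
      intro e
      apply sumT; intro k hk; simp [hT0 k hk]
    have s2' : Summable (fun k : Idx d => ∑ e : Fin d × Bool,
        Φ k * (c * ((if e.2 then H (k + Pi.single e.1 1) else H (k - Pi.single e.1 1))
          - H k) ^ 2)) := summable_sum (fun e _ => s2 e)
    simp only [hXdef]
    rw [Summable.tsum_add s1 (s2'.mul_left (1/2 : ℝ)), tsum_mul_left, tsum_mul_left,
      Summable.tsum_finsetSum (fun e _ => s2 e)]
  have := sub_eq_zero.mp hXY
  rw [hXsplit] at this
  rw [this]

private lemma toPt_addμ {d : ℕ} (ε : ℝ) (k : Idx d) (μ : Fin d) :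
    toPt ε k + ε • (Pi.single μ 1 : Pt d) = toPt ε (k + Pi.single μ 1) := by
  funext i
  simp only [toPt, Pi.add_apply, Pi.smul_apply, smul_eq_mul, Pi.single_apply]
  push_cast
  by_cases hi : i = μ <;> simp [hi] <;> ring

private lemma toPt_subμ {d : ℕ} (ε : ℝ) (k : Idx d) (μ : Fin d) :
    toPt ε k - ε • (Pi.single μ 1 : Pt d) = toPt ε (k - Pi.single μ 1) := by
  funext i
  simp only [toPt, Pi.sub_apply, Pi.smul_apply, smul_eq_mul, Pi.single_apply]
  push_cast
  by_cases hi : i = μ <;> simp [hi] <;> ring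

private lemma pt_sdir {d : ℕ} (ε : ℝ) (k : Idx d) (e : Fin d × Bool) :
    toPt ε k + ε • sdir d e
      = toPt ε (if e.2 then k + Pi.single e.1 1 else k - Pi.single e.1 1) := by
  rcases e with ⟨μ, b⟩
  cases b
  · have : sdir d (μ, false) = -(Pi.single μ 1 : Pt d) := by
      simp [sdir, Pi.single_neg]
    simp only [this, smul_neg, ← sub_eq_add_neg, toPt_subμ]
    rfl
  · have : sdir d (μ, true) = (Pi.single μ 1 : Pt d) := by simp [sdir]
    rw [this, toPt_addμ]
    rfl


/-- Lattice energy identity, equation (A.1.51). -/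
theorem lattice_energy_identity (d : ℕ) (hd : 1 ≤ d) (ε a : ℝ) (hε : 0 < ε)
    (h g φ : Pt d → ℝ)
    (hφfin : {z : Idx d | φ (toPt ε z) ≠ 0}.Finite)
    (heq : ∀ z : Idx d, φ (toPt ε z) ≠ 0 →
      a * h (toPt ε z) - latLap ε h (toPt ε z) = g (toPt ε z)) :
    a * lint ε (fun z => φ z * h z ^ 2)
      + (1 / 2) * ∑ e : Fin d × Bool, lint ε (fun z => φ z * (nabla ε e h z) ^ 2)
      = lint ε (fun z => φ z * h z * g z + (1 / 2) * latLap ε φ z * h z ^ 2) := by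
  classical
  have lap : ∀ (f : Pt d → ℝ) (k : Idx d), latLap ε f (toPt ε k)
      = ε⁻¹ ^ 2 * ∑ μ : Fin d, (f (toPt ε (k + Pi.single μ 1))
        + f (toPt ε (k - Pi.single μ 1)) - 2 * f (toPt ε k)) := by
    intro f k
    unfold latLap
    congr 1
    apply Finset.sum_congr rfl
    intro μ _
    rw [toPt_addμ, toPt_subμ]
  have heq' : ∀ k : Idx d, φ (toPt ε k) ≠ 0 →
      a * h (toPt ε k) - ε⁻¹ ^ 2 * ∑ μ : Fin d, (h (toPt ε (k + Pi.single μ 1))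
        + h (toPt ε (k - Pi.single μ 1)) - 2 * h (toPt ε k)) = g (toPt ε k) := by
    intro k hk
    rw [← lap h k]
    exact heq k hk
  have key := idx_energy a (ε⁻¹ ^ 2) (fun k => φ (toPt ε k)) (fun k => h (toPt ε k))
    (fun k => g (toPt ε k)) hφfin heq'
  have h1 : lint ε (fun z => φ z * h z ^ 2)
      = ε ^ d * ∑' k : Idx d, φ (toPt ε k) * h (toPt ε k) ^ 2 := rfl
  have h2 : ∀ e : Fin d × Bool, lint ε (fun z => φ z * nabla ε e h z ^ 2)
      = ε ^ d * ∑' k : Idx d, φ (toPt ε k) * (ε⁻¹ ^ 2 *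
          ((if e.2 then h (toPt ε (k + Pi.single e.1 1))
            else h (toPt ε (k - Pi.single e.1 1))) - h (toPt ε k)) ^ 2) := by
    intro e
    unfold lint
    congr 1
    apply tsum_congr
    intro k
    beta_reduce
    congr 1
    unfold nabla
    rw [mul_pow, pt_sdir, apply_ite (fun x : Idx d => h (toPt ε x))]
  have h3 : lint ε (fun z => φ z * h z * g z + 1 / 2 * latLap ε φ z * h z ^ 2)
      = ε ^ d * ∑' k : Idx d, (φ (toPt ε k) * h (toPt ε k) * g (toPt ε k)
          + 1 / 2 * (ε⁻¹ ^ 2 * ∑ μ : Fin d, (φ (toPt ε (k + Pi.single μ 1))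
            + φ (toPt ε (k - Pi.single μ 1)) - 2 * φ (toPt ε k))) * h (toPt ε k) ^ 2) := by
    unfold lint
    congr 1
    apply tsum_congr
    intro k
    beta_reduce
    rw [lap φ k]
  rw [h1, h3]
  simp only [h2]
  rw [← Finset.mul_sum]
  linear_combination (ε ^ d) * key


end FRD
end

section
/- (Lemma B.1: lattice Sobolev embedding, uniform in the lattice spacing) Let d ≥ 1 and ε = 1/N for a positive integer N, and set I^d_ε = [0,1]^d ∩ (εℤ)^d. There is a constant C_d depending only on d (not on ε or u) such that for every u : (εℤ)^d → ℝ and every subset X ⊂ I^d_ε: sup_{x ∈ X} |u(x)| ≤ C_d ‖u‖_{H_d(I^d_ε)}. -/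
open scoped ENNReal BigOperators

namespace FRD

variable {d : ℕ}

/-- The unit cube `[0,1]^d`. -/
def Icube (d : ℕ) : Set (Pt d) := {x | ∀ i, x i ∈ Set.Icc (0 : ℝ) 1}

/-!
In one dimension, `|a j|` is at most the mean of `|a|` over `{0, …, N}` plus the total
variation of `a` there, hence at most `ε ∑ (|a| + |∇a|)` because `ε (N + 1) ≥ 1`. Applying
this in each of the `d` coordinate directions in turn bounds `|u x|` by
`∑_S ε^d ∑_m |∇_S u (ε m)|`, where `S` runs over the sets of coordinates, `∇_S` is the mixed
forward difference and `m` runs over the `(N + 1)^d` lattice points of the cube. By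
Cauchy–Schwarz and `ε^d (N + 1)^d ≤ 2^d`, each term is at most `2^d ‖u‖_{H_d}`, which gives
the constant `4^d`.
-/

open Finset
open Function (update)

theorem abs_sub_le_sum_Ico_abs_sub (a : ℤ → ℝ) {p q : ℤ} (hpq : p ≤ q) :
    |a q - a p| ≤ ∑ t ∈ Ico p q, |a (t + 1) - a t| := by
  induction q, hpq using Int.leInduction with
  | base => simp
  | succ q hpq ih =>
    rw [Ico_add_one_right_eq_Icc, ← Ico_insert_right hpq,
      sum_insert (by simp)]
    calc |a (q + 1) - a p| ≤ |a (q + 1) - a q| + |a q - a p| := abs_sub_le _ _ _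
      _ ≤ _ := by gcongr

theorem abs_le_average_add_sum_Ico_abs_sub (a : ℤ → ℝ) {p q j : ℤ}
    (hj : j ∈ Icc p q) :
    |a j| ≤ ((Icc p q).card : ℝ)⁻¹ * ∑ t ∈ Icc p q, |a t|
      + ∑ t ∈ Ico p q, |a (t + 1) - a t| := by
  set V := ∑ t ∈ Ico p q, |a (t + 1) - a t|
  have hdist : ∀ s ∈ Icc p q, ∀ r ∈ Icc p q, s ≤ r → |a r - a s| ≤ V := by
    intro s hs r hr hsr
    rw [mem_Icc] at hs hr
    refine (abs_sub_le_sum_Ico_abs_sub a hsr).trans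
      (sum_le_sum_of_subset_of_nonneg (Ico_subset_Ico hs.1 hr.2) ?_)
    exact fun _ _ _ => abs_nonneg _
  have hpoint : ∀ s ∈ Icc p q, |a j| ≤ |a s| + V := by
    intro s hs
    have : |a j - a s| ≤ V := by
      rcases le_total s j with h | h
      · exact hdist s hs j hj h
      · rw [abs_sub_comm]; exact hdist j hj s hs h
    linarith [abs_sub_abs_le_abs_sub (a j) (a s)]
  have hcard : (0 : ℝ) < (Icc p q).card := by
    exact_mod_cast card_pos.mpr ⟨j, hj⟩
  have hsum := sum_le_sum hpoint
  rw [sum_const, sum_add_distrib, sum_const, nsmul_eq_mul,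
    nsmul_eq_mul] at hsum
  rw [← div_eq_inv_mul, div_add' _ _ _ hcard.ne', le_div_iff₀ hcard]
  linarith

theorem nabla_comm (ε : ℝ) (e e' : Fin d × Bool) (f : Pt d → ℝ) :
    nabla ε e (nabla ε e' f) = nabla ε e' (nabla ε e f) := by
  funext x
  simp only [nabla, add_right_comm x (ε • sdir d e) (ε • sdir d e')]
  ring

theorem nablaList_append (ε : ℝ) (l₁ l₂ : List (Fin d × Bool)) (f : Pt d → ℝ) :
    nablaList ε (l₁ ++ l₂) f = nablaList ε l₁ (nablaList ε l₂ f) := by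
  induction l₁ with
  | nil => rfl
  | cons e l ih => exact congrArg (nabla ε e) ih

theorem nablaList_perm (ε : ℝ) {l l' : List (Fin d × Bool)} (h : l.Perm l') (f : Pt d → ℝ) :
    nablaList ε l f = nablaList ε l' f := by
  induction h with
  | nil => rfl
  | cons e _ ih => exact congrArg (nabla ε e) ih
  | swap e e' l => exact nabla_comm ε e' e _
  | trans _ _ ih₁ ih₂ => exact ih₁.trans ih₂

/-- The mixed forward difference `∇_{ê_{i₁}} ⋯ ∇_{ê_{iₙ}}` over `S = {i₁, …, iₙ}`; the order
of `S.toList` is immaterial by `nablaList_perm`. -/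
noncomputable def nablaSet (ε : ℝ) (S : Finset (Fin d)) (f : Pt d → ℝ) : Pt d → ℝ :=
  nablaList ε (S.toList.map fun i => (i, true)) f

theorem nablaSet_insert (ε : ℝ) {i : Fin d} {S : Finset (Fin d)} (hi : i ∉ S)
    (f : Pt d → ℝ) :
    nablaSet ε (insert i S) f = nablaSet ε S (nabla ε (i, true) f) := by
  rw [nablaSet, nablaList_perm ε ((toList_insert hi).map _), List.map_cons,
    nablaList_perm ε (List.perm_append_singleton _ _).symm, nablaList_append]
  rfl

theorem toPt_update_add_smul_sdir (ε : ℝ) (k : Idx d) (i : Fin d) (t : ℤ) :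
    toPt ε (update k i t) + ε • sdir d (i, true)
      = toPt ε (update k i (t + 1)) := by
  funext j
  rcases eq_or_ne j i with rfl | hji
  · simp only [sdir, ↓reduceIte, Pi.add_apply, toPt, Function.update_self, Pi.smul_apply,
      Pi.single_eq_same, smul_eq_mul, mul_one, Int.cast_add, Int.cast_one]
    ring
  · simp [toPt, sdir, Function.update_of_ne hji, Pi.single_eq_of_ne hji]

theorem abs_le_sum_slice {N : ℕ} {ε : ℝ} (hε : 0 < ε) (hεN : 1 ≤ ε * (N + 1))
    (v : Pt d → ℝ) (i : Fin d) {k : Idx d} (hk : k i ∈ Icc 0 (N : ℤ)) :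
    |v (toPt ε k)| ≤ ε * ∑ t ∈ Icc 0 (N : ℤ),
      (|v (toPt ε (update k i t))|
        + |nabla ε (i, true) v (toPt ε (update k i t))|) := by
  set a : ℤ → ℝ := fun t => v (toPt ε (update k i t))
  have hcard : ((Icc 0 (N : ℤ)).card : ℝ)⁻¹ ≤ ε := by
    rw [Int.card_Icc, sub_zero, Int.toNat_natCast_add_one, Nat.cast_add_one]
    exact inv_le_of_inv_le₀ hε (by rw [← one_div, div_le_iff₀ hε]; linarith)
  have hnabla : ∀ t,
      |a (t + 1) - a t| = ε * |nabla ε (i, true) v (toPt ε (update k i t))| := by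
    intro t
    rw [nabla, toPt_update_add_smul_sdir, abs_mul, abs_inv, abs_of_pos hε,
      mul_inv_cancel_left₀ hε.ne']
  have hvar : ∑ t ∈ Ico 0 (N : ℤ), |a (t + 1) - a t|
      ≤ ε * ∑ t ∈ Icc 0 (N : ℤ),
          |nabla ε (i, true) v (toPt ε (update k i t))| := by
    simp only [mul_sum, ← hnabla]
    exact sum_le_sum_of_subset_of_nonneg Ico_subset_Icc_self
      fun _ _ _ => abs_nonneg _
  have hmean := abs_le_average_add_sum_Ico_abs_sub a hk
  simp only [a, Function.update_eq_self] at hmean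
  rw [sum_add_distrib, mul_add]
  refine hmean.trans (add_le_add (mul_le_mul_of_nonneg_right hcard ?_) hvar)
  exact sum_nonneg fun _ _ => abs_nonneg _

noncomputable def cubeIdx (d N : ℕ) : Finset (Idx d) :=
  Fintype.piFinset fun _ => Icc 0 (N : ℤ)

theorem update_mem_cubeIdx {N : ℕ} {k : Idx d} (hk : k ∈ cubeIdx d N) (i : Fin d) {t : ℤ}
    (ht : t ∈ Icc 0 (N : ℤ)) : update k i t ∈ cubeIdx d N := by
  rw [cubeIdx, Fintype.mem_piFinset] at hk ⊢
  intro j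
  rcases eq_or_ne j i with rfl | hji
  · simpa using ht
  · simpa [Function.update_of_ne hji] using hk j

noncomputable def slab (N : ℕ) (s : Finset (Fin d)) (k : Idx d) : Finset (Idx d) :=
  (cubeIdx d N).filter fun m => ∀ j ∉ s, m j = k j

theorem slab_empty {N : ℕ} {k : Idx d} (hk : k ∈ cubeIdx d N) : slab N ∅ k = {k} := by
  ext m
  simp only [slab, mem_filter, notMem_empty, not_false_eq_true, forall_const,
    mem_singleton, ← funext_iff]
  constructor
  · exact And.right
  · rintro rfl; exact ⟨hk, rfl⟩

theorem slab_univ (N : ℕ) (k : Idx d) : slab N univ k = cubeIdx d N := by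
  simp [slab]

theorem sum_slab_insert (N : ℕ) (g : Idx d → ℝ) {i : Fin d} {s : Finset (Fin d)}
    (hi : i ∉ s) (k : Idx d) :
    ∑ t ∈ Icc 0 (N : ℤ), ∑ m ∈ slab N s (update k i t), g m
      = ∑ m ∈ slab N (insert i s) k, g m := by
  have hmaps : ∀ m ∈ slab N (insert i s) k, m i ∈ Icc 0 (N : ℤ) := fun m hm =>
    Fintype.mem_piFinset.mp (mem_filter.mp hm).1 i
  rw [← sum_fiberwise_of_maps_to hmaps]
  refine sum_congr rfl fun t _ => sum_congr ?_ fun _ _ => rfl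
  ext m
  simp only [slab, mem_filter, mem_insert, not_or]
  constructor
  · rintro ⟨hm, hmk⟩
    have hmi : m i = t := by simpa using hmk i hi
    refine ⟨⟨hm, fun j ⟨hji, hjs⟩ => ?_⟩, hmi⟩
    simpa [Function.update_of_ne hji] using hmk j hjs
  · rintro ⟨⟨hm, hmk⟩, hmi⟩
    refine ⟨hm, fun j hjs => ?_⟩
    rcases eq_or_ne j i with rfl | hji
    · simpa using hmi
    · simpa [Function.update_of_ne hji] using hmk j ⟨hji, hjs⟩

theorem abs_le_sum_powerset_slab {N : ℕ} {ε : ℝ} (hε : 0 < ε) (hεN : 1 ≤ ε * (N + 1))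
    (s : Finset (Fin d)) (v : Pt d → ℝ) {k : Idx d} (hk : k ∈ cubeIdx d N) :
    |v (toPt ε k)|
      ≤ ε ^ s.card * ∑ S ∈ s.powerset, ∑ m ∈ slab N s k,
          |nablaSet ε S v (toPt ε m)| := by
  induction s using Finset.induction_on generalizing v k with
  | empty => simp [slab_empty hk, nablaSet, nablaList]
  | insert i s hi ih =>
    have hki : k i ∈ Icc 0 (N : ℤ) := Fintype.mem_piFinset.mp hk i
    have hS : ∀ S ∈ s.powerset,
        nablaSet ε S (nabla ε (i, true) v) = nablaSet ε (insert i S) v :=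
      fun S hS => (nablaSet_insert ε (fun h => hi (mem_powerset.mp hS h)) v).symm
    calc |v (toPt ε k)|
        ≤ ε * ∑ t ∈ Icc 0 (N : ℤ), (|v (toPt ε (update k i t))|
            + |nabla ε (i, true) v (toPt ε (update k i t))|) :=
          abs_le_sum_slice hε hεN v i hki
      _ ≤ ε * ∑ t ∈ Icc 0 (N : ℤ),
            (ε ^ s.card * ∑ S ∈ s.powerset, ∑ m ∈ slab N s (update k i t),
                |nablaSet ε S v (toPt ε m)|
              + ε ^ s.card * ∑ S ∈ s.powerset, ∑ m ∈ slab N s (update k i t),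
                |nablaSet ε S (nabla ε (i, true) v) (toPt ε m)|) := by
          gcongr with t ht <;> exact ih _ (update_mem_cubeIdx hk i ht)
      _ = ε ^ (insert i s).card * ∑ S ∈ (insert i s).powerset,
            ∑ m ∈ slab N (insert i s) k, |nablaSet ε S v (toPt ε m)| := by
          rw [card_insert_of_notMem hi, sum_powerset_insert hi,
            sum_add_distrib, ← mul_sum, ← mul_sum, sum_comm,
            sum_comm (s := Icc _ _)]
          simp only [sum_slab_insert N _ hi]
          rw [sum_congr rfl (f := fun S => ∑ m ∈ slab N (insert i s) k,
            |nablaSet ε S (nabla ε (i, true) v) (toPt ε m)|) fun S hS' => by rw [hS S hS'],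
            pow_succ]
          ring

theorem abs_le_sum_nablaSet {N : ℕ} {ε : ℝ} (hε : 0 < ε) (hεN : 1 ≤ ε * (N + 1))
    (v : Pt d → ℝ) {k : Idx d} (hk : k ∈ cubeIdx d N) :
    |v (toPt ε k)|
      ≤ ∑ S : Finset (Fin d), ε ^ d * ∑ m ∈ cubeIdx d N,
          |nablaSet ε S v (toPt ε m)| := by
  simpa [slab_univ, mul_sum] using abs_le_sum_powerset_slab hε hεN univ v hk

theorem card_cubeIdx (d N : ℕ) : (cubeIdx d N).card = (N + 1) ^ d := by
  simp [cubeIdx, Fintype.card_piFinset]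

theorem sq_sum_abs_le_two_pow_mul_sum_sq {N : ℕ} {ε : ℝ} (hε : 0 ≤ ε)
    (hεN : ε * (N + 1) ≤ 2) (w : Idx d → ℝ) :
    (ε ^ d * ∑ m ∈ cubeIdx d N, |w m|) ^ 2
      ≤ 2 ^ d * (ε ^ d * ∑ m ∈ cubeIdx d N, w m ^ 2) := by
  have hCS := sq_sum_le_card_mul_sum_sq (s := cubeIdx d N) (f := fun m => |w m|)
  simp only [sq_abs, card_cubeIdx, Nat.cast_pow, Nat.cast_add_one] at hCS
  have hsq : 0 ≤ ∑ m ∈ cubeIdx d N, w m ^ 2 := sum_nonneg fun _ _ => sq_nonneg _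
  calc (ε ^ d * ∑ m ∈ cubeIdx d N, |w m|) ^ 2
      = (ε ^ d) ^ 2 * (∑ m ∈ cubeIdx d N, |w m|) ^ 2 := by ring
    _ ≤ (ε ^ d) ^ 2 * ((N + 1) ^ d * ∑ m ∈ cubeIdx d N, w m ^ 2) := by gcongr
    _ = (ε * (N + 1)) ^ d * (ε ^ d * ∑ m ∈ cubeIdx d N, w m ^ 2) := by rw [mul_pow]; ring
    _ ≤ 2 ^ d * (ε ^ d * ∑ m ∈ cubeIdx d N, w m ^ 2) := by gcongr

theorem toPt_inv_mem_Icube_iff {N : ℕ} (hN : 0 < N) (k : Idx d) :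
    toPt (N : ℝ)⁻¹ k ∈ Icube d ↔ k ∈ cubeIdx d N := by
  have hN' : (0 : ℝ) < N := by exact_mod_cast hN
  simp only [Icube, Set.mem_ofPred_eq, Set.mem_Icc, cubeIdx, Fintype.mem_piFinset,
    mem_Icc, toPt]
  refine forall_congr' fun i => ?_
  rw [mul_nonneg_iff_of_pos_left (inv_pos.mpr hN'), inv_mul_le_iff₀ hN', mul_one]
  norm_cast

theorem sum_ofReal_le_eint (ε : ℝ) {X : Set (Pt d)} {A : Finset (Idx d)}
    (hA : ∀ m ∈ A, toPt ε m ∈ X) (F : Pt d → ℝ) :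
    ∑ m ∈ A, ENNReal.ofReal (ε ^ d * F (toPt ε m)) ≤ eint ε X F := by
  refine le_of_eq_of_le (sum_congr rfl fun m hm => ?_) (ENNReal.sum_le_tsum A)
  rw [Set.indicator_of_mem (hA m hm)]

theorem eint_nablaList_sq_le_sobSq (ε : ℝ) {K : ℕ} (X : Set (Pt d)) (f : Pt d → ℝ)
    {l : List (Fin d × Bool)} (hl : l.length ≤ K) :
    (eint ε X fun x => nablaList ε l f x ^ 2) ≤ 2 ^ l.length * sobSq ε K X f := by
  set E : ∀ j, (Fin j → Fin d × Bool) → ℝ≥0∞ :=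
    fun j es => eint ε X fun x => nablaList ε (List.ofFn es) f x ^ 2
  have hterm : E l.length l.get ≤ ∑ es, E l.length es :=
    single_le_sum (fun _ _ => zero_le) (mem_univ _)
  have hlevel : (2 : ℝ≥0∞)⁻¹ ^ l.length * ∑ es, E l.length es ≤ sobSq ε K X f :=
    single_le_sum (f := fun j => (2 : ℝ≥0∞)⁻¹ ^ j * ∑ es, E j es)
      (fun _ _ => zero_le) (mem_range.mpr (Nat.lt_succ_of_le hl))
  simp only [E, List.ofFn_get] at hterm
  calc (eint ε X fun x => nablaList ε l f x ^ 2)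
      = 2 ^ l.length *
          ((2 : ℝ≥0∞)⁻¹ ^ l.length * eint ε X fun x => nablaList ε l f x ^ 2) := by
        rw [← mul_assoc, ← mul_pow, ENNReal.mul_inv_cancel two_ne_zero ENNReal.ofNat_ne_top,
          one_pow, one_mul]
    _ ≤ 2 ^ l.length * sobSq ε K X f := by gcongr; exact le_trans (by gcongr) hlevel

theorem _root_.ENNReal.le_mul_rpow_half_of_sq_le {a b c : ℝ≥0∞} (h : a ^ 2 ≤ c ^ 2 * b) :
    a ≤ c * b ^ (1 / 2 : ℝ) := by
  have hhalf : (1 / 2 : ℝ) = ((2 : ℕ) : ℝ)⁻¹ := by norm_num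
  calc a = (a ^ 2) ^ (1 / 2 : ℝ) := by rw [hhalf, ENNReal.pow_rpow_inv_natCast two_ne_zero]
    _ ≤ (c ^ 2 * b) ^ (1 / 2 : ℝ) := ENNReal.rpow_le_rpow h (by norm_num)
    _ = c * b ^ (1 / 2 : ℝ) := by
      rw [ENNReal.mul_rpow_of_nonneg _ _ (by norm_num), hhalf,
        ENNReal.pow_rpow_inv_natCast two_ne_zero]

theorem ofReal_integral_abs_nablaList_le_sobNorm {N : ℕ} (hN : 0 < N) (u : Pt d → ℝ)
    {l : List (Fin d × Bool)} (hl : l.length ≤ d) :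
    ENNReal.ofReal ((N : ℝ)⁻¹ ^ d *
        ∑ m ∈ cubeIdx d N, |nablaList (N : ℝ)⁻¹ l u (toPt (N : ℝ)⁻¹ m)|)
      ≤ 2 ^ d * sobNorm (N : ℝ)⁻¹ d (Icube d ∩ latt d (N : ℝ)⁻¹) u := by
  set ε : ℝ := (N : ℝ)⁻¹
  set w : Idx d → ℝ := fun m => nablaList ε l u (toPt ε m)
  have hN' : (1 : ℝ) ≤ N := by exact_mod_cast hN
  have hεN : ε * (N + 1) ≤ 2 := by
    rw [mul_add_one, inv_mul_cancel₀ (by positivity)]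
    linarith [inv_le_one_of_one_le₀ hN']
  have hL2 : ENNReal.ofReal (ε ^ d * ∑ m ∈ cubeIdx d N, w m ^ 2)
      ≤ 2 ^ d * sobSq ε d (Icube d ∩ latt d ε) u := by
    rw [mul_sum, ENNReal.ofReal_sum_of_nonneg fun _ _ => by positivity]
    have hcube : ∀ m ∈ cubeIdx d N, toPt ε m ∈ Icube d ∩ latt d ε :=
      fun m hm => ⟨(toPt_inv_mem_Icube_iff hN m).mpr hm, m, rfl⟩
    refine (sum_ofReal_le_eint ε hcube fun x => nablaList ε l u x ^ 2).trans ?_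
    refine (eint_nablaList_sq_le_sobSq ε _ u hl).trans ?_
    gcongr
    exact one_le_two
  refine ENNReal.le_mul_rpow_half_of_sq_le ?_
  rw [← ENNReal.ofReal_pow (by positivity)]
  calc ENNReal.ofReal ((ε ^ d * ∑ m ∈ cubeIdx d N, |w m|) ^ 2)
      ≤ ENNReal.ofReal (2 ^ d * (ε ^ d * ∑ m ∈ cubeIdx d N, w m ^ 2)) :=
        ENNReal.ofReal_le_ofReal (sq_sum_abs_le_two_pow_mul_sum_sq (by positivity) hεN w)
    _ ≤ 2 ^ d * (2 ^ d * sobSq ε d (Icube d ∩ latt d ε) u) := by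
        rw [ENNReal.ofReal_mul (by positivity), ENNReal.ofReal_pow zero_le_two,
          ENNReal.ofReal_ofNat]
        gcongr
    _ = (2 ^ d) ^ 2 * sobSq ε d (Icube d ∩ latt d ε) u := by ring

theorem lattice_sobolev_embedding_general (d : ℕ) :
    ∃ C : ℝ, 0 < C ∧
      ∀ N : ℕ, 0 < N →
      ∀ u : Pt d → ℝ, ∀ X : Set (Pt d), X ⊆ Icube d ∩ latt d ((N : ℝ)⁻¹) →
      ∀ x ∈ X, ENNReal.ofReal |u x| ≤
        ENNReal.ofReal C * sobNorm ((N : ℝ)⁻¹) d (Icube d ∩ latt d ((N : ℝ)⁻¹)) u := by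
  refine ⟨4 ^ d, by positivity, fun N hN u X hX x hx => ?_⟩
  obtain ⟨hxI, k, rfl⟩ := hX hx
  have hk : k ∈ cubeIdx d N := (toPt_inv_mem_Icube_iff hN k).mp hxI
  have hε : (0 : ℝ) < (N : ℝ)⁻¹ := by positivity
  have hεN : 1 ≤ (N : ℝ)⁻¹ * (N + 1) := by
    rw [mul_add_one, inv_mul_cancel₀ (by positivity)]
    linarith
  calc ENNReal.ofReal |u (toPt (N : ℝ)⁻¹ k)|
      ≤ ∑ S : Finset (Fin d), ENNReal.ofReal ((N : ℝ)⁻¹ ^ d *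
          ∑ m ∈ cubeIdx d N, |nablaSet (N : ℝ)⁻¹ S u (toPt (N : ℝ)⁻¹ m)|) := by
        rw [← ENNReal.ofReal_sum_of_nonneg fun _ _ => by positivity]
        exact ENNReal.ofReal_le_ofReal (abs_le_sum_nablaSet hε hεN u hk)
    _ ≤ ∑ S : Finset (Fin d), 2 ^ d * sobNorm (N : ℝ)⁻¹ d (Icube d ∩ latt d (N : ℝ)⁻¹) u := by
        gcongr with S
        refine ofReal_integral_abs_nablaList_le_sobNorm hN u ?_
        simpa using S.card_le_univ
    _ = ENNReal.ofReal (4 ^ d) * sobNorm (N : ℝ)⁻¹ d (Icube d ∩ latt d (N : ℝ)⁻¹) u := by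
        rw [sum_const, card_univ, Fintype.card_finset, Fintype.card_fin,
          nsmul_eq_mul, ← mul_assoc, ENNReal.ofReal_pow zero_le_four]
        norm_num [← mul_pow]

/-- Lemma B.1, lattice Sobolev embedding, uniform in the lattice spacing. -/
theorem lattice_sobolev_embedding (d : ℕ) (hd : 1 ≤ d) :
    ∃ C : ℝ, 0 < C ∧
      ∀ N : ℕ, 0 < N →
      ∀ u : Pt d → ℝ, ∀ X : Set (Pt d), X ⊆ Icube d ∩ latt d ((N : ℝ)⁻¹) →
      ∀ x ∈ X, ENNReal.ofReal |u x| ≤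
        ENNReal.ofReal C * sobNorm ((N : ℝ)⁻¹) d (Icube d ∩ latt d ((N : ℝ)⁻¹)) u :=
  lattice_sobolev_embedding_general d

end FRD
end

section
/- (Lemma B.2: lattice Poincaré inequality, uniform in the lattice spacing) Let d ≥ 1 and ε = 1/N for a positive integer N. There is a constant C depending only on d (not on ε or u) such that for every u : (εℤ)^d → ℝ vanishing at every lattice point outside the open cube (0,1)^d: ∫_{(εℤ)^d} dx |u(x)|² ≤ C Σ_{μ=1}^d ∫_{(εℤ)^d} dx |(∇_{ê_μ} u)(x)|². -/
/-!
Along a coordinate line, a function vanishing outside `{1, …, N-1}` is the sum of its increments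
starting from the zero at `0`, so by Cauchy–Schwarz each value squared is at most `N` times the sum
of the squared increments; summing over the `N` points of the line gives the one-dimensional
Poincaré inequality with constant `N² = ε⁻²`, which is exactly the scaling of the lattice
derivative. Summing over all lines in one fixed direction gives the inequality with `C = 1`.
-/

open scoped ENNReal BigOperators

open Finset Function

theorem sq_le_mul_sum_range_sq_sub {g : ℕ → ℝ} (hg : g 0 = 0) {k n : ℕ} (hk : k ≤ n) :
    g k ^ 2 ≤ n * ∑ m ∈ range n, (g (m + 1) - g m) ^ 2 := by
  have htel : g k = ∑ m ∈ range k, (g (m + 1) - g m) := by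
    rw [sum_range_sub, hg, sub_zero]
  calc g k ^ 2 ≤ k * ∑ m ∈ range k, (g (m + 1) - g m) ^ 2 := by
        simpa [htel] using sq_sum_le_card_mul_sum_sq (s := range k) (f := fun m => g (m + 1) - g m)
    _ ≤ n * ∑ m ∈ range n, (g (m + 1) - g m) ^ 2 := by gcongr

theorem sum_range_sq_le_sum_range_sq_mul_sub {g : ℕ → ℝ} (hg : g 0 = 0) (n : ℕ) :
    ∑ k ∈ range n, g k ^ 2 ≤ ∑ m ∈ range n, (n * (g (m + 1) - g m)) ^ 2 := by
  calc ∑ k ∈ range n, g k ^ 2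
      ≤ #(range n) • (n * ∑ m ∈ range n, (g (m + 1) - g m) ^ 2) :=
        sum_le_card_nsmul _ _ _ fun k hk => sq_le_mul_sum_range_sq_sub hg (mem_range.mp hk).le
    _ = ∑ m ∈ range n, (n * (g (m + 1) - g m)) ^ 2 := by
        simp only [card_range, nsmul_eq_mul, mul_pow, ← mul_sum]
        ring

theorem tsum_ofReal_sq_le_tsum_ofReal_sq_mul_sub {f : ℤ → ℝ} {N : ℕ}
    (hf : ∀ j ∉ Set.Ioo (0 : ℤ) N, f j = 0) :
    ∑' j, ENNReal.ofReal (f j ^ 2) ≤ ∑' j, ENNReal.ofReal ((N * (f (j + 1) - f j)) ^ 2) := by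
  have hsupp : ∀ j ∉ (range N).map Nat.castEmbedding, ENNReal.ofReal (f j ^ 2) = 0 := by
    intro j hj
    rw [hf j fun hj' => hj ?_]
    · simp
    · simp only [Set.mem_Ioo] at hj'
      simp only [mem_map, mem_range, Nat.castEmbedding_apply]
      exact ⟨j.toNat, by omega, by omega⟩
  rw [tsum_eq_sum hsupp, sum_map]
  calc ∑ k ∈ range N, ENNReal.ofReal (f (Nat.castEmbedding k) ^ 2)
      = ENNReal.ofReal (∑ k ∈ range N, f k ^ 2) :=
        (ENNReal.ofReal_sum_of_nonneg fun _ _ => sq_nonneg _).symm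
    _ ≤ ENNReal.ofReal (∑ m ∈ range N, (N * (f (m + 1 : ℕ) - f m)) ^ 2) :=
        ENNReal.ofReal_le_ofReal <|
          sum_range_sq_le_sum_range_sq_mul_sub (g := fun k => f k) (by simpa using hf 0) N
    _ = ∑ j ∈ (range N).map Nat.castEmbedding, ENNReal.ofReal ((N * (f (j + 1) - f j)) ^ 2) := by
        rw [ENNReal.ofReal_sum_of_nonneg fun _ _ => sq_nonneg _, sum_map]
        simp
    _ ≤ _ := ENNReal.sum_le_tsum _

theorem ENNReal.tsum_le_tsum_of_tsum_update_le {ι β : Type*} [DecidableEq ι] (i : ι)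
    {F G : (ι → β) → ℝ≥0∞} (h : ∀ k, ∑' b, F (update k i b) ≤ ∑' b, G (update k i b)) :
    ∑' k, F k ≤ ∑' k, G k := by
  rcases isEmpty_or_nonempty β with hβ | ⟨⟨b₀⟩⟩
  · have : IsEmpty (ι → β) := ⟨fun k => isEmptyElim (k i)⟩
    simp
  let E := (Equiv.funSplitAt i β).trans (Equiv.prodComm _ _)
  have hline : ∀ k' b, E.symm (k', b) = update (E.symm (k', b₀)) i b := by
    intro k' b
    ext j
    by_cases hj : j = i
    · subst hj; simp [E]
    · simp [E, hj]
  rw [← E.symm.tsum_eq F, ← E.symm.tsum_eq G, ENNReal.tsum_prod', ENNReal.tsum_prod']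
  refine ENNReal.tsum_le_tsum fun k' => ?_
  simpa only [← hline] using h (E.symm (k', b₀))

namespace FRD

variable {d : ℕ}

theorem eint_univ (ε : ℝ) (F : Pt d → ℝ) :
    eint ε Set.univ F = ∑' k, ENNReal.ofReal (ε ^ d * F (toPt ε k)) := by
  simp only [eint, Set.indicator_univ]

theorem toPt_add_smul_sdir (ε : ℝ) (k : Idx d) (μ : Fin d) :
    toPt ε k + ε • sdir d (μ, true) = toPt ε (update k μ (k μ + 1)) := by
  ext i
  by_cases h : i = μ
  · subst h
    simp [toPt, sdir]
    ring
  · simp [toPt, sdir, h]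

theorem nabla_toPt_update (ε : ℝ) (u : Pt d → ℝ) (k : Idx d) (μ : Fin d) (j : ℤ) :
    nabla ε (μ, true) u (toPt ε (update k μ j)) =
      ε⁻¹ * (u (toPt ε (update k μ (j + 1))) - u (toPt ε (update k μ j))) := by
  rw [nabla, toPt_add_smul_sdir, update_self, update_idem]

theorem eint_sq_le_eint_sq_nabla {N : ℕ} (hN : 0 < N) (μ : Fin d) {u : Pt d → ℝ}
    (hu : ∀ z : Idx d, ¬ (0 < toPt (N : ℝ)⁻¹ z μ ∧ toPt (N : ℝ)⁻¹ z μ < 1) →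
      u (toPt (N : ℝ)⁻¹ z) = 0) :
    eint (N : ℝ)⁻¹ Set.univ (fun x => u x ^ 2) ≤
      eint (N : ℝ)⁻¹ Set.univ (fun x => nabla (N : ℝ)⁻¹ (μ, true) u x ^ 2) := by
  have hNpos : (0 : ℝ) < N := Nat.cast_pos.mpr hN
  rw [eint_univ, eint_univ]
  refine ENNReal.tsum_le_tsum_of_tsum_update_le μ fun k => ?_
  set f : ℤ → ℝ := fun j => u (toPt (N : ℝ)⁻¹ (update k μ j))
  have hf : ∀ j ∉ Set.Ioo (0 : ℤ) N, f j = 0 := by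
    refine fun j hj => hu _ fun ⟨h0, h1⟩ => hj ⟨?_, ?_⟩
    · simp only [toPt, update_self] at h0
      exact_mod_cast pos_of_mul_pos_right h0 (by positivity)
    · simp only [toPt, update_self, inv_mul_lt_one₀ hNpos] at h1
      exact_mod_cast h1
  simp only [ENNReal.ofReal_mul (by positivity : (0 : ℝ) ≤ (N : ℝ)⁻¹ ^ d), ENNReal.tsum_mul_left,
    nabla_toPt_update, inv_inv]
  gcongr _ * ?_
  exact tsum_ofReal_sq_le_tsum_ofReal_sq_mul_sub hf

/-- Lemma B.2, lattice Poincaré inequality, uniform in the lattice spacing. -/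
theorem lattice_poincare_inequality (d : ℕ) (hd : 1 ≤ d) :
    ∃ C : ℝ, 0 < C ∧
      ∀ N : ℕ, 0 < N →
      ∀ u : Pt d → ℝ,
        (∀ z : Idx d, ¬ (∀ i, 0 < toPt (N : ℝ)⁻¹ z i ∧ toPt (N : ℝ)⁻¹ z i < 1) →
          u (toPt (N : ℝ)⁻¹ z) = 0) →
        eint ((N : ℝ)⁻¹) Set.univ (fun x => u x ^ 2) ≤
          ENNReal.ofReal C * ∑ μ : Fin d,
            eint ((N : ℝ)⁻¹) Set.univ (fun x => (nabla ((N : ℝ)⁻¹) (μ, true) u x) ^ 2) := by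
  refine ⟨1, one_pos, fun N hN u hu => ?_⟩
  obtain ⟨μ₀⟩ : Nonempty (Fin d) := ⟨⟨0, hd⟩⟩
  calc eint (N : ℝ)⁻¹ Set.univ (fun x => u x ^ 2)
      ≤ eint (N : ℝ)⁻¹ Set.univ (fun x => nabla (N : ℝ)⁻¹ (μ₀, true) u x ^ 2) :=
        eint_sq_le_eint_sq_nabla hN μ₀ fun z hz => hu z fun h => hz (h μ₀)
    _ ≤ ∑ μ : Fin d, eint (N : ℝ)⁻¹ Set.univ (fun x => nabla (N : ℝ)⁻¹ (μ, true) u x ^ 2) :=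
        single_le_sum (f := fun μ => eint _ _ fun x => nabla _ (μ, true) u x ^ 2)
          (fun _ _ => zero_le) (mem_univ μ₀)
    _ = ENNReal.ofReal 1 * _ := by rw [ENNReal.ofReal_one, one_mul]

end FRD
end

section
/- (Lemma 6.5: exact first-order Euler–Maclaurin formula comparing continuum and lattice integrals) Let d ≥ 1, ε > 0, and let f : ℝ^d → ℝ be continuously differentiable with compact support. For 1 ≤ j ≤ d define M_j f := Σ_{(z_j,…,z_d) ∈ (εℤ)^{d−j+1}} ε^{d−j+1} ∫_{ℝ^{j−1}} dz_1⋯dz_{j−1} (∇̃_j f)(z), where z = (z_1,…,z_d) and (∇̃_j f)(z) := ∫₀¹ (1−t) (∂_j f)(z + t ε ê_j) dt. Then ∫_{ℝ^d} f(z) dz − ε^d Σ_{z ∈ (εℤ)^d} f(z) = ε Σ_{j=1}^{d} M_j f. -/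
/-!
Let `A_j` be the semi-discrete integral of `f` that integrates over the first `j` coordinates and
takes the `ε`-Riemann sum over the remaining ones, so that `A_0` is the lattice sum and `A_d` the
integral. Going from `A_j` to `A_{j+1}` replaces, in coordinate `j`, the value at a lattice point
`a = εk` by the integral over the cell `[a, a + ε)`, and on each cell the first-order Taylor formula
with integral remainder, `∫_a^{a+ε} g = ε g(a) + ε² ∫₀¹ (1 - t) g'(a + tε) dt`, shows that
`A_{j+1} - A_j` is `ε` times the `j`-th term on the right. The differences telescope. Compact
support makes all lattice sums finite and all integrals absolutely convergent, which justifies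
Fubini and the regrouping of the sums.
-/

open scoped ENNReal BigOperators

namespace FRD

variable {d : ℕ}

/-- Continuum directional derivative in coordinate direction `e`. -/
noncomputable def cderiv (e : Fin d) (f : Pt d → ℝ) (x : Pt d) : ℝ :=
  fderiv ℝ f x (Pi.single e 1 : Pt d)

/-- A point of `ℝ^d` whose coordinates `i < j` are the continuum variables `u` and whose
coordinates `i ≥ j` are the lattice variables `ε • K`. -/
noncomputable def mixedPt (ε : ℝ) (j : Fin d) (u : {i : Fin d // (i : ℕ) < (j : ℕ)} → ℝ)
    (K : {i : Fin d // (j : ℕ) ≤ (i : ℕ)} → ℤ) : Pt d :=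
  fun i => if h : (i : ℕ) < (j : ℕ) then u ⟨i, h⟩ else ε * (K ⟨i, Nat.le_of_not_lt h⟩ : ℝ)

end FRD

open MeasureTheory Set

theorem integral_Ico_eq_mul_add_integral_one_sub_mul {g g' : ℝ → ℝ}
    (hg : ∀ x, HasDerivAt g (g' x) x) (hg' : Continuous g') (a : ℝ) {ε : ℝ} (hε : 0 < ε) :
    ∫ x in Ico a (a + ε), g x
      = ε * g a + ε ^ 2 * ∫ t in (0:ℝ)..1, (1 - t) * g' (a + t * ε) := by
  have hline : ∀ t, HasDerivAt (fun s => g (a + s * ε)) (g' (a + t * ε) * ε) t := fun t =>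
    (hg _).comp t (by simpa using ((hasDerivAt_id t).mul_const ε).const_add a)
  have hweight : ∀ t : ℝ, HasDerivAt (fun s : ℝ => 1 - s) (-1) t := fun t =>
    by simpa using (hasDerivAt_id t).const_sub 1
  -- integration by parts against the weight `1 - t`, which vanishes at `t = 1`
  have hparts : (∫ t in (0:ℝ)..1, (1 - t) * g' (a + t * ε)) * ε
      = (∫ t in (0:ℝ)..1, g (a + t * ε)) - g a := by
    have := intervalIntegral.integral_mul_deriv_eq_deriv_mul (a := 0) (b := 1)
      (fun t _ => hweight t) (fun t _ => hline t) intervalIntegrable_const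
      (Continuous.intervalIntegrable (by fun_prop) _ _)
    simp only [← mul_assoc, intervalIntegral.integral_mul_const] at this
    simpa [intervalIntegral.integral_neg, sub_eq_add_neg, add_comm] using this
  have hsubst : ∫ x in a..a + ε, g x = ε * ∫ t in (0:ℝ)..1, g (a + t * ε) := by
    rw [intervalIntegral.integral_comp_mul_right (fun y => g (a + y)) hε.ne',
      intervalIntegral.integral_comp_add_left g a]
    simp [hε.ne']
  rw [integral_Ico_eq_integral_Ioo, ← integral_Ioc_eq_integral_Ioo,
    ← intervalIntegral.integral_of_le (by linarith), hsubst]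
  linear_combination (-ε) * hparts

theorem integral_eq_tsum_integral_Ico {E : Type*} [MeasureSpace E] [SFinite (volume : Measure E)]
    {G : E × ℝ → ℝ} (hG : Integrable G) {ε : ℝ} (hε : 0 < ε) :
    ∫ p, G p = ∑' k : ℤ, ∫ u, ∫ x in Ico (ε * k) (ε * k + ε), G (u, x) := by
  have hcells : ⋃ k : ℤ, Ico (ε * k) (ε * k + ε) = univ := by
    simpa [zsmul_eq_mul, add_mul, mul_comm, mul_add] using iUnion_Ico_zsmul hε
  have hdisj : Pairwise (Function.onFun Disjoint fun k : ℤ => Ico (ε * k) (ε * k + ε)) := by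
    simpa [zsmul_eq_mul, add_mul, mul_comm, mul_add] using pairwise_disjoint_Ico_zsmul ε
  have hslabs := integral_iUnion (μ := volume) (fun k => MeasurableSet.univ.prod measurableSet_Ico)
    (fun k l hkl => (hdisj hkl).set_prod_right univ univ) hG.integrableOn
  rw [← prod_iUnion, hcells, univ_prod_univ, setIntegral_univ] at hslabs
  rw [hslabs]
  congr 1 with k
  have hprod : (volume : Measure (E × ℝ)).restrict (univ ×ˢ Ico (ε * k) (ε * k + ε))
      = volume.prod (volume.restrict (Ico (ε * k) (ε * k + ε))) := by
    rw [Measure.volume_eq_prod, ← Measure.prod_restrict, Measure.restrict_univ]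
  rw [hprod]
  exact integral_prod _ (hprod ▸ hG.integrableOn)

namespace FRD

variable {d : ℕ}

abbrev IdxLt (d j : ℕ) := {i : Fin d // (i : ℕ) < j}
abbrev IdxGe (d j : ℕ) := {i : Fin d // j ≤ (i : ℕ)}

/-- `mixedPt` with `j : ℕ`, so that `j = d` (no lattice coordinates left) is allowed. -/
noncomputable def mixedPtNat (ε : ℝ) (j : ℕ) (u : IdxLt d j → ℝ) (K : IdxGe d j → ℤ) : Pt d :=
  fun i => if h : (i : ℕ) < j then u ⟨i, h⟩ else ε * (K ⟨i, Nat.le_of_not_lt h⟩ : ℝ)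

noncomputable def semiDiscreteIntegral (ε : ℝ) (j : ℕ) (F : Pt d → ℝ) : ℝ :=
  ∑' K : IdxGe d j → ℤ, ε ^ (d - j) * ∫ u : IdxLt d j → ℝ, F (mixedPtNat ε j u K)

/-- The paper's `∇̃_j f`. -/
noncomputable def smoothedDeriv (ε : ℝ) (j : Fin d) (f : Pt d → ℝ) (z : Pt d) : ℝ :=
  ∫ t in (0:ℝ)..1, (1 - t) * cderiv j f (z + (t * ε) • (Pi.single j 1 : Pt d))

theorem integral_Ico_comp_add_sub_smul_single {f : Pt d → ℝ} (hf : ContDiff ℝ 1 f) (ε : ℝ)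
    (hε : 0 < ε) (j : Fin d) (z : Pt d) (a : ℝ) :
    ∫ x in Ico a (a + ε), f (z + (x - a) • (Pi.single j 1 : Pt d))
      = ε * f z + ε ^ 2 * smoothedDeriv ε j f z := by
  have hline : ∀ x, HasDerivAt (fun x => f (z + (x - a) • (Pi.single j 1 : Pt d)))
      (cderiv j f (z + (x - a) • (Pi.single j 1 : Pt d))) x := fun x =>
    (hf.differentiable one_ne_zero _).hasFDerivAt.comp_hasDerivAt x
      (by simpa using (((hasDerivAt_id x).sub_const a).smul_const _).const_add z)
  have hcont : Continuous fun x => cderiv j f (z + (x - a) • (Pi.single j 1 : Pt d)) :=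
    ((hf.continuous_fderiv one_ne_zero).comp (by fun_prop)).clm_apply continuous_const
  simpa [smoothedDeriv] using integral_Ico_eq_mul_add_integral_one_sub_mul hline hcont a hε

theorem continuous_smoothedDeriv {f : Pt d → ℝ} (hf : ContDiff ℝ 1 f) (ε : ℝ) (j : Fin d) :
    Continuous (smoothedDeriv ε j f) :=
  intervalIntegral.continuous_parametric_intervalIntegral_of_continuous'
    (continuous_const.sub continuous_snd |>.mul <|
      ((hf.continuous_fderiv one_ne_zero).comp (by fun_prop)).clm_apply continuous_const) 0 1

theorem hasCompactSupport_smoothedDeriv {f : Pt d → ℝ} (hf : HasCompactSupport f) (ε : ℝ)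
    (j : Fin d) : HasCompactSupport (smoothedDeriv ε j f) := by
  refine HasCompactSupport.intro ((hf.isCompact.prod (isCompact_Icc (a := 0) (b := 1))).image
    (f := fun p : Pt d × ℝ => p.1 - (p.2 * ε) • (Pi.single j 1 : Pt d)) (by fun_prop))
    fun z hz => ?_
  have hvanish : ∀ t ∈ uIcc (0:ℝ) 1,
      (1 - t) * cderiv j f (z + (t * ε) • (Pi.single j 1 : Pt d)) = 0 := by
    intro t ht
    rw [uIcc_of_le zero_le_one] at ht
    have hout : z + (t * ε) • (Pi.single j 1 : Pt d) ∉ tsupport f :=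
      fun hmem => hz ⟨(_, t), ⟨hmem, ht⟩, by simp⟩
    have : fderiv ℝ f (z + (t * ε) • (Pi.single j 1 : Pt d)) = 0 :=
      Function.notMem_support.mp fun h => hout (support_fderiv_subset ℝ h)
    simp [cderiv, this]
  simp [smoothedDeriv, intervalIntegral.integral_congr hvanish]

@[simp]
theorem mixedPtNat_apply_of_lt (ε : ℝ) {j : ℕ} (u : IdxLt d j → ℝ) (K : IdxGe d j → ℤ)
    (i : IdxLt d j) : mixedPtNat ε j u K i = u i :=
  dif_pos i.2

@[simp]
theorem mixedPtNat_apply_of_ge (ε : ℝ) {j : ℕ} (u : IdxLt d j → ℝ) (K : IdxGe d j → ℤ)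
    (i : IdxGe d j) : mixedPtNat ε j u K i = ε * K i :=
  dif_neg (not_lt.2 i.2)

theorem continuous_mixedPtNat (ε : ℝ) (j : ℕ) (K : IdxGe d j → ℤ) :
    Continuous fun u : IdxLt d j → ℝ => mixedPtNat ε j u K := by
  refine continuous_pi fun i => ?_
  unfold mixedPtNat
  split_ifs <;> fun_prop

theorem isClosedEmbedding_mixedPtNat (ε : ℝ) (j : ℕ) (K : IdxGe d j → ℤ) :
    Topology.IsClosedEmbedding fun u : IdxLt d j → ℝ => mixedPtNat ε j u K :=
  Function.LeftInverse.isClosedEmbedding (f := fun z (i : IdxLt d j) => z i)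
    (fun u => funext (mixedPtNat_apply_of_lt ε u K)) (by fun_prop) (continuous_mixedPtNat ε j K)

theorem integrable_comp_mixedPtNat {F : Pt d → ℝ} (hF : Continuous F) (hFs : HasCompactSupport F)
    (ε : ℝ) (j : ℕ) (K : IdxGe d j → ℤ) :
    Integrable fun u : IdxLt d j → ℝ => F (mixedPtNat ε j u K) :=
  (hF.comp (continuous_mixedPtNat ε j K)).integrable_of_hasCompactSupport
    (hFs.comp_isClosedEmbedding (isClosedEmbedding_mixedPtNat ε j K))

theorem summable_integral_comp_mixedPtNat {F : Pt d → ℝ} (hFs : HasCompactSupport F) {ε : ℝ}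
    (hε : 0 < ε) (j : ℕ) :
    Summable fun K : IdxGe d j → ℤ => ∫ u : IdxLt d j → ℝ, F (mixedPtNat ε j u K) := by
  obtain ⟨R, hR⟩ := hFs.isCompact.isBounded.subset_closedBall 0
  refine summable_of_hasFiniteSupport <|
    (isCompact_closedBall (0 : IdxGe d j → ℤ) (R / ε)).finite_of_discrete.subset fun K hK => ?_
  obtain ⟨u, hu⟩ : ∃ u, F (mixedPtNat ε j u K) ≠ 0 := by
    by_contra! h
    exact hK (by simp [h])
  have hz := mem_closedBall_zero_iff.mp (hR (subset_tsupport F hu))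
  rw [mem_closedBall_zero_iff, pi_norm_le_iff_of_nonneg (by positivity [(norm_nonneg _).trans hz])]
  intro i
  have hi := (norm_le_pi_norm (mixedPtNat ε j u K) i.1).trans hz
  rw [mixedPtNat_apply_of_ge, norm_mul, Real.norm_of_nonneg hε.le] at hi
  rwa [le_div_iff₀ hε, mul_comm, Int.norm_eq_abs]

section Split

variable (n : ℕ) (hn : n < d)

def idxGeSplit : (IdxGe d n → ℤ) ≃ (IdxGe d (n + 1) → ℤ) × ℤ where
  toFun K := (fun i => K ⟨i.1, by omega⟩, K ⟨⟨n, hn⟩, le_rfl⟩)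
  invFun p i := if h : n + 1 ≤ (i.1 : ℕ) then p.1 ⟨i.1, h⟩ else p.2
  left_inv K := by
    funext ⟨i, hi⟩
    dsimp only
    split_ifs with h
    · rfl
    · exact congrArg K (Subtype.ext (Fin.ext (by dsimp only at h ⊢; omega)))
  right_inv p := Prod.ext (funext fun i => dif_pos i.2) (dif_neg (by simp))

theorem idxGeSplit_symm_apply (K₁ : IdxGe d (n + 1) → ℤ) (k : ℤ) (i : IdxGe d n) :
    (idxGeSplit n hn).symm (K₁, k) i = if h : n + 1 ≤ (i.1 : ℕ) then K₁ ⟨i.1, h⟩ else k :=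
  rfl

def idxLtCastSucc : IdxLt d n ≃ {i : IdxLt d (n + 1) // (i.1 : ℕ) < n} where
  toFun i := ⟨⟨i.1, by omega⟩, i.2⟩
  invFun i := ⟨i.1.1, i.2⟩

abbrev uniqueIdxLtSuccNotLt : Unique {i : IdxLt d (n + 1) // ¬ (i.1 : ℕ) < n} where
  default := ⟨⟨⟨n, hn⟩, n.lt_succ_self⟩, lt_irrefl n⟩
  uniq i := Subtype.ext <| Subtype.ext <| Fin.ext <| by
    have h₁ := i.1.2
    have h₂ := i.2
    dsimp only at h₁ h₂ ⊢
    omega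

noncomputable def idxLtSuccEquiv : ((IdxLt d n → ℝ) × ℝ) ≃ᵐ (IdxLt d (n + 1) → ℝ) :=
  haveI := uniqueIdxLtSuccNotLt n hn
  ((MeasurableEquiv.piCongrLeft (fun _ => ℝ) (idxLtCastSucc n)).prodCongr
      (MeasurableEquiv.funUnique _ ℝ).symm).trans
    (MeasurableEquiv.piEquivPiSubtypeProd (fun _ => ℝ) fun i : IdxLt d (n + 1) => (i.1 : ℕ) < n).symm

theorem measurePreserving_idxLtSuccEquiv :
    MeasurePreserving (idxLtSuccEquiv (d := d) n hn) volume volume := by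
  refine MeasurePreserving.trans ?_ (volume_preserving_piEquivPiSubtypeProd
    (fun _ : IdxLt d (n + 1) => ℝ) fun i => (i.1 : ℕ) < n).symm
  rw [Measure.volume_eq_prod, Measure.volume_eq_prod]
  refine (volume_measurePreserving_piCongrLeft (fun _ => ℝ) (idxLtCastSucc n)).prod ?_
  convert (@volume_preserving_funUnique _ ℝ (uniqueIdxLtSuccNotLt n hn) _).symm using 3
  rfl

theorem idxLtSuccEquiv_apply (u : IdxLt d n → ℝ) (x : ℝ) (i : IdxLt d (n + 1)) :
    idxLtSuccEquiv n hn (u, x) i = if h : (i.1 : ℕ) < n then u ⟨i.1, h⟩ else x := by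
  simp only [idxLtSuccEquiv, MeasurableEquiv.piEquivPiSubtypeProd, MeasurableEquiv.symm_mk,
    MeasurableEquiv.trans_apply, MeasurableEquiv.coe_mk, Equiv.piEquivPiSubtypeProd_symm_apply]
  split_ifs with h
  · exact Equiv.piCongrLeft_apply_apply (fun _ => ℝ) (idxLtCastSucc n) u ⟨i.1, h⟩
  · rfl

end Split

theorem mixedPtNat_succ_idxLtSuccEquiv (ε : ℝ) {n : ℕ} (hn : n < d) (u : IdxLt d n → ℝ) (x : ℝ)
    (K₁ : IdxGe d (n + 1) → ℤ) (k : ℤ) :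
    mixedPtNat ε (n + 1) (idxLtSuccEquiv n hn (u, x)) K₁
      = mixedPtNat ε n u ((idxGeSplit n hn).symm (K₁, k))
        + (x - ε * k) • (Pi.single ⟨n, hn⟩ 1 : Pt d) := by
  funext i
  simp only [mixedPtNat, idxLtSuccEquiv_apply, idxGeSplit_symm_apply, Pi.add_apply,
    Pi.smul_apply, Pi.single_apply, Fin.ext_iff, smul_eq_mul]
  split_ifs <;> first | omega | ring

theorem tsum_idxGeSplit_symm {n : ℕ} (hn : n < d) {φ : (IdxGe d n → ℤ) → ℝ} (hφ : Summable φ) :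
    ∑' K₁, ∑' k, φ ((idxGeSplit n hn).symm (K₁, k)) = ∑' K, φ K := by
  have hφ' := (idxGeSplit n hn).symm.summable_iff.mpr hφ
  exact (hφ'.tsum_prod' hφ'.prod_factor).symm.trans (Equiv.tsum_eq (idxGeSplit n hn).symm φ)

theorem integral_comp_mixedPtNat_succ {F : Pt d → ℝ} (hF : Continuous F)
    (hFs : HasCompactSupport F) {ε : ℝ} (hε : 0 < ε) {n : ℕ} (hn : n < d)
    (K₁ : IdxGe d (n + 1) → ℤ) :
    ∫ u : IdxLt d (n + 1) → ℝ, F (mixedPtNat ε (n + 1) u K₁)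
      = ∑' k : ℤ, ∫ u : IdxLt d n → ℝ, ∫ x in Ico (ε * k) (ε * k + ε),
          F (mixedPtNat ε n u ((idxGeSplit n hn).symm (K₁, k))
            + (x - ε * k) • (Pi.single ⟨n, hn⟩ 1 : Pt d)) := by
  have hψ := measurePreserving_idxLtSuccEquiv n hn
  have hint : Integrable fun p => F (mixedPtNat ε (n + 1) (idxLtSuccEquiv n hn p) K₁) :=
    (hψ.integrable_comp_emb (idxLtSuccEquiv n hn).measurableEmbedding).2
      (integrable_comp_mixedPtNat hF hFs ε _ K₁)
  rw [← hψ.integral_comp', integral_eq_tsum_integral_Ico hint hε]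
  exact tsum_congr fun k => by simp only [mixedPtNat_succ_idxLtSuccEquiv ε hn _ _ K₁ k]

theorem integral_integral_Ico_comp_mixedPtNat {f : Pt d → ℝ} (hf : ContDiff ℝ 1 f)
    (hfs : HasCompactSupport f) {ε : ℝ} (hε : 0 < ε) {n : ℕ} (hn : n < d)
    (K : IdxGe d n → ℤ) (a : ℝ) :
    ∫ u : IdxLt d n → ℝ, ∫ x in Ico a (a + ε),
        f (mixedPtNat ε n u K + (x - a) • (Pi.single ⟨n, hn⟩ 1 : Pt d))
      = ε * (∫ u, f (mixedPtNat ε n u K))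
        + ε ^ 2 * ∫ u, smoothedDeriv ε ⟨n, hn⟩ f (mixedPtNat ε n u K) := by
  simp only [integral_Ico_comp_add_sub_smul_single hf ε hε]
  rw [integral_add ((integrable_comp_mixedPtNat hf.continuous hfs ε n K).const_mul _)
    ((integrable_comp_mixedPtNat (continuous_smoothedDeriv hf ε _)
      (hasCompactSupport_smoothedDeriv hfs ε _) ε n K).const_mul _),
    integral_const_mul, integral_const_mul]

theorem semiDiscreteIntegral_succ {f : Pt d → ℝ} (hf : ContDiff ℝ 1 f) (hfs : HasCompactSupport f)
    {ε : ℝ} (hε : 0 < ε) {n : ℕ} (hn : n < d) :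
    semiDiscreteIntegral ε (n + 1) f
      = semiDiscreteIntegral ε n f + ε * semiDiscreteIntegral ε n (smoothedDeriv ε ⟨n, hn⟩ f) := by
  have hpow : ε ^ (d - n) = ε ^ (d - (n + 1)) * ε := by rw [← pow_succ]; congr 1; omega
  calc semiDiscreteIntegral ε (n + 1) f
      = ∑' K₁, ∑' k, (fun K => ε ^ (d - n) * (∫ u, f (mixedPtNat ε n u K))
          + ε * (ε ^ (d - n) * ∫ u, smoothedDeriv ε ⟨n, hn⟩ f (mixedPtNat ε n u K)))
            ((idxGeSplit n hn).symm (K₁, k)) := by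
        refine tsum_congr fun K₁ => ?_
        rw [integral_comp_mixedPtNat_succ hf.continuous hfs hε hn, ← tsum_mul_left]
        refine tsum_congr fun k => ?_
        rw [integral_integral_Ico_comp_mixedPtNat hf hfs hε hn, hpow]
        ring
    _ = _ := by
        have hf₀ := (summable_integral_comp_mixedPtNat hfs hε n).mul_left (ε ^ (d - n))
        have hf₁ := ((summable_integral_comp_mixedPtNat
          (hasCompactSupport_smoothedDeriv hfs ε ⟨n, hn⟩) hε n).mul_left (ε ^ (d - n))).mul_left ε
        rw [tsum_idxGeSplit_symm hn (hf₀.add hf₁), hf₀.tsum_add hf₁, semiDiscreteIntegral,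
          semiDiscreteIntegral, ← tsum_mul_left]

theorem semiDiscreteIntegral_zero (ε : ℝ) (F : Pt d → ℝ) :
    semiDiscreteIntegral ε 0 F = ε ^ d * ∑' k : Idx d, F (toPt ε k) := by
  have : IsEmpty (IdxLt d 0) := ⟨fun i => Nat.not_lt_zero _ i.2⟩
  have hint : ∀ K : IdxGe d 0 → ℤ, ∫ u : IdxLt d 0 → ℝ, F (mixedPtNat ε 0 u K)
      = F (toPt ε fun i => K ⟨i, i.1.zero_le⟩) := by
    intro K
    rw [Measure.volume_pi_eq_dirac, integral_dirac]
    congr 1 with i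
  simp only [semiDiscreteIntegral, hint, Nat.sub_zero, tsum_mul_left]
  congr 1
  exact (Equiv.arrowCongr (Equiv.subtypeUnivEquiv fun i => i.1.zero_le) (Equiv.refl ℤ)).tsum_eq
    fun k => F (toPt ε k)

theorem semiDiscreteIntegral_top (ε : ℝ) (F : Pt d → ℝ) :
    semiDiscreteIntegral ε d F = ∫ z, F z := by
  have hint : ∀ K : IdxGe d d → ℤ, ∫ u : IdxLt d d → ℝ, F (mixedPtNat ε d u K) = ∫ z, F z := by
    intro K
    rw [← (volume_measurePreserving_piCongrLeft (fun _ => ℝ)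
      (Equiv.subtypeUnivEquiv fun i : Fin d => i.2)).integral_comp']
    congr 1 with u
    congr 1 with i
    simp [mixedPtNat, MeasurableEquiv.piCongrLeft, Equiv.piCongrLeft_apply_eq_cast]
  have : IsEmpty (IdxGe d d) := ⟨fun i => (Nat.not_le.2 i.1.2) i.2⟩
  simp [semiDiscreteIntegral, hint]

theorem euler_maclaurin_first_order_general (d : ℕ) (ε : ℝ) (hε : 0 < ε)
    (f : Pt d → ℝ) (hf : ContDiff ℝ 1 f) (hsupp : HasCompactSupport f) :
    (∫ z : Pt d, f z) - ε ^ d * ∑' k : Idx d, f (toPt ε k) =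
      ε * ∑ j : Fin d,
        ∑' K : ({i : Fin d // (j : ℕ) ≤ (i : ℕ)} → ℤ),
          ε ^ (d - (j : ℕ)) *
            ∫ u : ({i : Fin d // (i : ℕ) < (j : ℕ)} → ℝ),
              ∫ t in (0:ℝ)..1, (1 - t) *
                cderiv j f (mixedPt ε j u K + (t * ε) • (Pi.single j 1 : Pt d)) := by
  rw [← semiDiscreteIntegral_top ε, ← semiDiscreteIntegral_zero,
    ← Finset.sum_range_sub (fun j => semiDiscreteIntegral ε j f), ← Fin.sum_univ_eq_sum_range,
    Finset.mul_sum]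
  refine Finset.sum_congr rfl fun j _ => ?_
  rw [semiDiscreteIntegral_succ hf hsupp hε j.2, add_sub_cancel_left]
  rfl

/-- Lemma 6.5, exact first-order Euler–Maclaurin formula comparing
continuum and lattice integrals. -/
theorem euler_maclaurin_first_order (d : ℕ) (hd : 1 ≤ d) (ε : ℝ) (hε : 0 < ε)
    (f : Pt d → ℝ) (hf : ContDiff ℝ 1 f) (hsupp : HasCompactSupport f) :
    (∫ z : Pt d, f z) - ε ^ d * ∑' k : Idx d, f (toPt ε k) =
      ε * ∑ j : Fin d,
        ∑' K : ({i : Fin d // (j : ℕ) ≤ (i : ℕ)} → ℤ),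
          ε ^ (d - (j : ℕ)) *
            ∫ u : ({i : Fin d // (i : ℕ) < (j : ℕ)} → ℝ),
              ∫ t in (0:ℝ)..1, (1 - t) *
                cderiv j f (mixedPt ε j u K + (t * ε) • (Pi.single j 1 : Pt d)) :=
  euler_maclaurin_first_order_general d ε hε f hf hsupp

end FRD
end
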